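/- If a triple of flags (A, B, C) in the real projective plane, represented by pairs of vectors (a₁,a₂), (b₁,b₂), (c₁,c₂), has positive triple ratio r₃⁺(A,B,C) = [Δ(a₁,a₂,b₁)Δ(b₁,b₂,c₁)Δ(c₁,c₂,a₁)] / [Δ(a₁,a₂,c₁)Δ(b₁,b₂,a₁)Δ(c₁,c₂,b₁)] > 0 (with all six determinants nonzero), then the three points a₁, b₁, c₁ are not collinear, i.e. Δ(a₁,b₁,c₁) ≠ 0. -/
import Mathlib


/-- The determinant of three vectors in `ℝ³` (as rows). -/
def det3 (u v w : Fin 3 → ℝ) : ℝ := (Matrix.of ![u, v, w]).det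

private lemma det3_expand (u v w : Fin 3 → ℝ) :
    det3 u v w = u 0 * (v 1 * w 2 - v 2 * w 1) - u 1 * (v 0 * w 2 - v 2 * w 0)
      + u 2 * (v 0 * w 1 - v 1 * w 0) := by
  simp [det3, Matrix.det_fin_three]; ring

private def cr (u v : Fin 3 → ℝ) : Fin 3 → ℝ :=
  ![u 1 * v 2 - u 2 * v 1, u 2 * v 0 - u 0 * v 2, u 0 * v 1 - u 1 * v 0]

private lemma key (a₁ a₂ b₁ b₂ c₁ c₂ : Fin 3 → ℝ) :
    det3 a₁ a₂ b₁ * det3 b₁ b₂ c₁ * det3 c₁ c₂ a₁ +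
    det3 a₁ a₂ c₁ * det3 b₁ b₂ a₁ * det3 c₁ c₂ b₁ =
    det3 a₁ b₁ c₁ * det3 (cr a₁ a₂) (cr b₁ b₂) (cr c₁ c₂) := by
  simp only [det3_expand, cr]
  simp only [Matrix.cons_val_zero, Matrix.cons_val_one, Matrix.head_cons,
    Matrix.cons_val_two, Matrix.tail_cons]
  ring

/-- If a triple of flags in `ℝP²`, represented by pairs of vectors `(a₁,a₂), (b₁,b₂), (c₁,c₂)`,
has positive triple ratio (with all six determinants nonzero), then the points
`a₁, b₁, c₁` are not collinear: `Δ(a₁,b₁,c₁) ≠ 0`. -/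
theorem stmt6 (a₁ a₂ b₁ b₂ c₁ c₂ : Fin 3 → ℝ)
    (h₁ : det3 a₁ a₂ b₁ ≠ 0) (h₂ : det3 b₁ b₂ c₁ ≠ 0) (h₃ : det3 c₁ c₂ a₁ ≠ 0)
    (h₄ : det3 a₁ a₂ c₁ ≠ 0) (h₅ : det3 b₁ b₂ a₁ ≠ 0) (h₆ : det3 c₁ c₂ b₁ ≠ 0)
    (hpos : 0 < det3 a₁ a₂ b₁ * det3 b₁ b₂ c₁ * det3 c₁ c₂ a₁ /
      (det3 a₁ a₂ c₁ * det3 b₁ b₂ a₁ * det3 c₁ c₂ b₁)) :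
    det3 a₁ b₁ c₁ ≠ 0 := by
  intro h
  have hk := key a₁ a₂ b₁ b₂ c₁ c₂
  rw [h, zero_mul] at hk
  have hN : det3 a₁ a₂ b₁ * det3 b₁ b₂ c₁ * det3 c₁ c₂ a₁ =
      -(det3 a₁ a₂ c₁ * det3 b₁ b₂ a₁ * det3 c₁ c₂ b₁) := by linarith
  have hD : det3 a₁ a₂ c₁ * det3 b₁ b₂ a₁ * det3 c₁ c₂ b₁ ≠ 0 := by
    exact mul_ne_zero (mul_ne_zero h₄ h₅) h₆
  rw [hN, neg_div, div_self hD] at hpos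
  linarith
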